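/- arXiv:2511.20550 — 4 statements merged into one kernel-verified Lean document; each statement's English description precedes it below -/
import Mathlib

section
/- Let f : ℝ → ℝ, let n be a natural number with n > 0, and let a, b, c, x be reals with a ≤ c ≤ b, a ≤ x ≤ b, and x ≠ c. Suppose f is n-times differentiable at t (local sense) for every t ∈ [a, b]. Then there exists t strictly between x and c (i.e. x < t < c if x < c, and c < t < x otherwise) such that f x = (∑ m in Finset.range n, iteratedDeriv m f c / m.factorial * (x − c) ^ m) + iteratedDeriv n f t / n.factorial * (x − c) ^ n. -/
/-- `f` is `n`-times differentiable at `a` (local sense): for every `j < n - 1` the `j`-th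
iterated derivative is differentiable in a neighbourhood of `a`, and the `(n-1)`-th iterated
derivative is differentiable at `a`; every function is `0`-times differentiable everywhere. -/
def NTimesDiffAt : ℕ → (ℝ → ℝ) → ℝ → Prop
  | 0, _, _ => True
  | (m + 1), f, a =>
      (∀ j < m, ∃ ε > 0, ∀ y, |y - a| < ε → DifferentiableAt ℝ (iteratedDeriv j f) y) ∧
      DifferentiableAt ℝ (iteratedDeriv m f) a

private lemma iterWithin_eq_iter {f : ℝ → ℝ} {s : Set ℝ} (hs : UniqueDiffOn ℝ s) {m : ℕ}
    (hd : ∀ j < m, ∀ y ∈ s, DifferentiableAt ℝ (iteratedDeriv j f) y) :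
    ∀ j ≤ m, ∀ y ∈ s, iteratedDerivWithin j f s y = iteratedDeriv j f y := by
  intro j
  induction j with
  | zero => intro _ y _; simp
  | succ k ih =>
    intro hk y hy
    have hk' : k < m := Nat.lt_of_succ_le hk
    rw [iteratedDerivWithin_succ,
      derivWithin_congr (fun z hz => ih hk'.le z hz) (ih hk'.le y hy),
      (hd k hk' y hy).derivWithin (hs y hy), ← iteratedDeriv_succ]

private lemma taylor_key {f : ℝ → ℝ} {m : ℕ} {u v : ℝ} (huv : u < v)
    (hd : ∀ j ≤ m, ∀ y ∈ Set.Icc u v, DifferentiableAt ℝ (iteratedDeriv j f) y) :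
    ∃ t ∈ Set.Ioo u v, f v = (∑ k ∈ Finset.range (m + 1),
        iteratedDeriv k f u / (k.factorial : ℝ) * (v - u) ^ k) +
      iteratedDeriv (m + 1) f t / ((m + 1).factorial : ℝ) * (v - u) ^ (m + 1) := by
  have hU : UniqueDiffOn ℝ (Set.Icc u v) := uniqueDiffOn_Icc huv
  have heq := iterWithin_eq_iter hU (fun j hj y hy => hd j hj.le y hy)
  have hf : ContDiffOn ℝ m f (Set.Icc u v) := by
    rw [contDiffOn_nat_iff_continuousOn_differentiableOn_deriv hU]
    constructor
    · intro k hk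
      have hc : ContinuousOn (iteratedDeriv k f) (Set.Icc u v) :=
        fun y hy => ((hd k hk y hy).continuousAt).continuousWithinAt
      exact hc.congr (fun y hy => heq k hk y hy)
    · intro k hk y hy
      exact ((hd k hk.le y hy).differentiableWithinAt).congr
        (fun z hz => heq k hk.le z hz) (heq k hk.le y hy)
  have hf' : DifferentiableOn ℝ (iteratedDerivWithin m f (Set.Icc u v)) (Set.Ioo u v) := by
    intro y hy
    exact (((hd m le_rfl y (Set.Ioo_subset_Icc_self hy)).differentiableWithinAt).congr
      (fun z hz => heq m le_rfl z (Set.Ioo_subset_Icc_self hz))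
      (heq m le_rfl y (Set.Ioo_subset_Icc_self hy)))
  obtain ⟨t, ht, h⟩ := taylor_mean_remainder_lagrange huv.ne
    (by rwa [Set.uIcc_of_le huv.le]) (by rwa [Set.uIcc_of_le huv.le, Set.uIoo_of_le huv.le])
  rw [Set.uIcc_of_le huv.le] at h
  rw [Set.uIoo_of_le huv.le] at ht
  have htI : t ∈ Set.Icc u v := Set.Ioo_subset_Icc_self ht
  have hder : iteratedDerivWithin (m + 1) f (Set.Icc u v) t = iteratedDeriv (m + 1) f t := by
    rw [iteratedDerivWithin_succ,
      derivWithin_congr (fun z hz => heq m le_rfl z hz) (heq m le_rfl t htI),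
      (hd m le_rfl t htI).derivWithin (hU t htI), ← iteratedDeriv_succ]
  have hsum : taylorWithinEval f m (Set.Icc u v) u v = ∑ k ∈ Finset.range (m + 1),
      iteratedDeriv k f u / (k.factorial : ℝ) * (v - u) ^ k := by
    rw [taylor_within_apply]
    refine Finset.sum_congr rfl fun k hk => ?_
    rw [heq k (Nat.lt_succ_iff.mp (Finset.mem_range.mp hk)) u (Set.left_mem_Icc.mpr huv.le),
      smul_eq_mul]
    ring
  rw [hsum, hder] at h
  exact ⟨t, ht, by linear_combination h⟩

theorem taylor_lagrange_pointwise (f : ℝ → ℝ) (n : ℕ) (hn : 0 < n)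
    (a b c x : ℝ) (hac : a ≤ c) (hcb : c ≤ b) (hax : a ≤ x) (hxb : x ≤ b)
    (hxc : x ≠ c) (hdiff : ∀ t ∈ Set.Icc a b, NTimesDiffAt n f t) :
    ∃ t : ℝ, (if x < c then x < t ∧ t < c else c < t ∧ t < x) ∧
      f x = (∑ m ∈ Finset.range n,
          iteratedDeriv m f c / (m.factorial : ℝ) * (x - c) ^ m) +
        iteratedDeriv n f t / (n.factorial : ℝ) * (x - c) ^ n := by
  obtain ⟨m, rfl⟩ : ∃ m, n = m + 1 := ⟨n - 1, (Nat.succ_pred_eq_of_pos hn).symm⟩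
  have hd : ∀ j ≤ m, ∀ y ∈ Set.Icc a b, DifferentiableAt ℝ (iteratedDeriv j f) y := by
    intro j hj y hy
    obtain ⟨h1, h2⟩ := hdiff y hy
    rcases eq_or_lt_of_le hj with rfl | hj'
    · exact h2
    · obtain ⟨ε, hε, hall⟩ := h1 j hj'
      exact hall y (by simpa using hε)
  rcases hxc.lt_or_gt with hlt | hlt
  · -- x < c : apply the key lemma to fun y => f (-y) on [-c, -x]
    have hdg : ∀ j ≤ m, ∀ y ∈ Set.Icc (-c) (-x),
        DifferentiableAt ℝ (iteratedDeriv j (fun y => f (-y))) y := by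
      intro j hj y hy
      have hge : iteratedDeriv j (fun y => f (-y)) = fun z => (-1 : ℝ) ^ j • iteratedDeriv j f (-z) :=
        funext fun z => iteratedDeriv_comp_neg j f z
      rw [hge]
      have hyI : -y ∈ Set.Icc a b := by
        obtain ⟨hy1, hy2⟩ := hy
        constructor <;> [linarith; linarith]
      exact ((hd j hj (-y) hyI).comp y (differentiableAt_id.neg)).const_smul ((-1 : ℝ) ^ j)
    obtain ⟨t, ht, hres⟩ := taylor_key (f := fun y => f (-y)) (neg_lt_neg hlt) hdg
    simp only [iteratedDeriv_comp_neg, neg_neg, smul_eq_mul, sub_neg_eq_add] at hres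
    have hterm : ∀ (k : ℕ) (D : ℝ), (-1 : ℝ) ^ k * D / (k.factorial : ℝ) * (-x + c) ^ k
        = D / (k.factorial : ℝ) * (x - c) ^ k := by
      intro k D
      have h1 : (-x + c : ℝ) = -(x - c) := by ring
      have h2 : ((-1 : ℝ)) ^ k * (-1 : ℝ) ^ k = 1 := by rw [← mul_pow]; norm_num
      rw [h1, neg_pow (x - c) k]
      have h3 : (-1 : ℝ) ^ k * D / (k.factorial : ℝ) * ((-1 : ℝ) ^ k * (x - c) ^ k)
          = ((-1 : ℝ) ^ k * (-1 : ℝ) ^ k) * (D / (k.factorial : ℝ) * (x - c) ^ k) := by ring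
      rw [h3, h2, one_mul]
    refine ⟨-t, ?_, ?_⟩
    · rw [if_pos hlt]
      obtain ⟨ht1, ht2⟩ := ht
      constructor <;> [linarith; linarith]
    · rw [hres]
      congr 1
      · exact Finset.sum_congr rfl fun k _ => hterm k _
      · exact hterm (m + 1) _
  · -- c < x : apply the key lemma directly on [c, x]
    have hd' : ∀ j ≤ m, ∀ y ∈ Set.Icc c x, DifferentiableAt ℝ (iteratedDeriv j f) y :=
      fun j hj y hy => hd j hj y (Set.Icc_subset_Icc hac hxb hy)
    obtain ⟨t, ht, hres⟩ := taylor_key hlt hd'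
    exact ⟨t, by rw [if_neg (not_lt.mpr hlt.le)]; exact ⟨ht.1, ht.2⟩, hres⟩
end

section
/- Let f : ℝ → ℝ, c : ℝ, and let n be a natural number. If f is (n + 1)-times differentiable at c (local sense), then the function x ↦ (f x − ∑ m in Finset.range (n + 2), iteratedDeriv m f c / m.factorial * (x − c) ^ m) / (x − c) ^ (n + 1) tends to 0 as x tends to c (along the punctured neighbourhood filter 𝓝[≠] c). -/
open Filter Topology

/-- Derivative of the Taylor polynomial. -/
lemma taylorSum_hasDerivAt (f : ℝ → ℝ) (c x : ℝ) (n : ℕ) :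
    HasDerivAt (fun y => ∑ m ∈ Finset.range (n + 1),
        iteratedDeriv m f c / (m.factorial : ℝ) * (y - c) ^ m)
      (∑ m ∈ Finset.range n,
        iteratedDeriv m (deriv f) c / (m.factorial : ℝ) * (x - c) ^ m) x := by
  have h : ∀ m ∈ Finset.range (n + 1),
      HasDerivAt (fun y => iteratedDeriv m f c / (m.factorial : ℝ) * (y - c) ^ m)
        (iteratedDeriv m f c / (m.factorial : ℝ) * ((m : ℝ) * (x - c) ^ (m - 1))) x := by
    intro m _
    have h1 : HasDerivAt (fun y : ℝ => (y - c) ^ m) ((m : ℝ) * (x - c) ^ (m - 1)) x := by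
      simpa using ((hasDerivAt_id x).sub_const c).fun_pow m
    exact h1.const_mul _
  have hsum := HasDerivAt.fun_sum h
  refine hsum.congr_deriv ?_
  rw [Finset.sum_range_succ']
  simp only [Nat.cast_zero, zero_mul, mul_zero, add_zero]
  refine Finset.sum_congr rfl fun k _ => ?_
  rw [← iteratedDeriv_succ']
  have hfac : ((k + 1).factorial : ℝ) = (k + 1) * (k.factorial : ℝ) := by
    push_cast [Nat.factorial_succ]; ring
  have hk : (k.factorial : ℝ) ≠ 0 := Nat.cast_ne_zero.2 k.factorial_ne_zero
  have hk1 : ((k : ℝ) + 1) ≠ 0 := by positivity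
  rw [hfac]
  push_cast
  field_simp

/-- Mean-value-theorem step: if `φ c = 0`, `φ` has derivative `ψ` near `c`, and
`ψ y / (y-c)^k → 0`, then `φ x / (x-c)^(k+1) → 0`. -/
lemma mvt_step (φ ψ : ℝ → ℝ) (c : ℝ) (k : ℕ) (ε : ℝ) (hε : 0 < ε)
    (hφc : φ c = 0)
    (hd : ∀ y, |y - c| < ε → HasDerivAt φ (ψ y) y)
    (hψ : Tendsto (fun y => ψ y / (y - c) ^ k) (𝓝[≠] c) (𝓝 0)) :
    Tendsto (fun x => φ x / (x - c) ^ (k + 1)) (𝓝[≠] c) (𝓝 0) := by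
  rw [Metric.tendsto_nhdsWithin_nhds] at hψ ⊢
  intro δ hδ
  obtain ⟨ε', hε', h1⟩ := hψ δ hδ
  refine ⟨min ε ε', lt_min hε hε', ?_⟩
  intro x hx hxd
  have hxne : x ≠ c := hx
  have hxε : |x - c| < ε := by
    have := hxd.trans_le (min_le_left _ _)
    rwa [Real.dist_eq] at this
  have hxε' : |x - c| < ε' := by
    have := hxd.trans_le (min_le_right _ _)
    rwa [Real.dist_eq] at this
  -- get ξ strictly between c and x with ψ ξ = φ x / (x - c)
  have key : ∃ ξ : ℝ, ξ ≠ c ∧ |ξ - c| < |x - c| ∧ ψ ξ = φ x / (x - c) := by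
    rcases lt_or_gt_of_ne hxne with hlt | hgt
    · -- x < c : interval [x, c]
      have hcont : ContinuousOn φ (Set.Icc x c) := by
        intro y hy
        have : |y - c| < ε := by
          rw [abs_sub_lt_iff]
          constructor
          · linarith [hy.2]
          · have : x - c ≤ y - c := by linarith [hy.1]
            have h2 : -(y - c) ≤ -(x - c) := by linarith
            have h3 : -(x - c) ≤ |x - c| := neg_le_abs _
            linarith
        exact ((hd y this).continuousAt).continuousWithinAt
      have hder : ∀ y ∈ Set.Ioo x c, HasDerivAt φ (ψ y) y := by
        intro y hy
        apply hd
        rw [abs_sub_lt_iff]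
        constructor
        · linarith [hy.2]
        · have h3 : -(x - c) ≤ |x - c| := neg_le_abs _
          linarith [hy.1]
      obtain ⟨ξ, hξ, hξ2⟩ := exists_hasDerivAt_eq_slope φ ψ hlt hcont hder
      refine ⟨ξ, ne_of_lt hξ.2, ?_, ?_⟩
      · rw [abs_sub_lt_iff]
        constructor
        · have : |x - c| ≥ 0 := abs_nonneg _
          linarith [hξ.2]
        · have h3 : -(x - c) ≤ |x - c| := neg_le_abs _
          linarith [hξ.1]
      · rw [hξ2, hφc]
        have hne : c - x ≠ 0 := sub_ne_zero.2 (ne_of_gt hlt)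
        have hne' : x - c ≠ 0 := sub_ne_zero.2 (ne_of_lt hlt)
        field_simp
        ring
    · -- c < x : interval [c, x]
      have habs : x - c ≤ |x - c| := le_abs_self _
      have hcont : ContinuousOn φ (Set.Icc c x) := by
        intro y hy
        have : |y - c| < ε := by
          rw [abs_sub_lt_iff]
          constructor
          · linarith [hy.2]
          · linarith [hy.1]
        exact ((hd y this).continuousAt).continuousWithinAt
      have hder : ∀ y ∈ Set.Ioo c x, HasDerivAt φ (ψ y) y := by
        intro y hy
        apply hd
        rw [abs_sub_lt_iff]
        constructor
        · linarith [hy.2]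
        · linarith [hy.1]
      obtain ⟨ξ, hξ, hξ2⟩ := exists_hasDerivAt_eq_slope φ ψ hgt hcont hder
      refine ⟨ξ, ne_of_gt hξ.1, ?_, ?_⟩
      · rw [abs_sub_lt_iff]
        constructor
        · linarith [hξ.2]
        · have : (0:ℝ) ≤ |x - c| := abs_nonneg _
          linarith [hξ.1]
      · rw [hξ2, hφc, sub_zero]
  obtain ⟨ξ, hξne, hξlt, hξeq⟩ := key
  have hξε' : dist ξ c < ε' := by rw [Real.dist_eq]; exact hξlt.trans hxε'
  have hbound := h1 hξne hξε'
  rw [dist_zero_right, Real.norm_eq_abs] at hbound ⊢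
  -- |φ x / (x-c)^(k+1)| = |ψ ξ| / |x-c|^k ≤ |ψ ξ| / |ξ-c|^k < δ
  have hxc0 : (0:ℝ) < |x - c| := abs_pos.2 (sub_ne_zero.2 hxne)
  have hξc0 : (0:ℝ) < |ξ - c| := abs_pos.2 (sub_ne_zero.2 hξne)
  have heq : |φ x / (x - c) ^ (k + 1)| = |ψ ξ| / |x - c| ^ k := by
    have : φ x / (x - c) ^ (k + 1) = ψ ξ / (x - c) ^ k := by
      rw [hξeq]
      field_simp
      ring
    rw [this, abs_div, abs_pow]
  rw [heq]
  calc |ψ ξ| / |x - c| ^ k ≤ |ψ ξ| / |ξ - c| ^ k := by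
        apply div_le_div_of_nonneg_left (abs_nonneg _) (pow_pos hξc0 k)
        exact pow_le_pow_left₀ (le_of_lt hξc0) hξlt.le k
    _ < δ := by rwa [abs_div, abs_pow] at hbound
  -- done

/-- The main induction. -/
lemma taylor_peano_aux (c : ℝ) : ∀ (n : ℕ) (f : ℝ → ℝ), NTimesDiffAt (n + 1) f c →
    Filter.Tendsto
      (fun x => (f x - ∑ m ∈ Finset.range (n + 2),
          iteratedDeriv m f c / (m.factorial : ℝ) * (x - c) ^ m) / (x - c) ^ (n + 1))
      (𝓝[≠] c) (𝓝 0) := by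
  intro n
  induction n with
  | zero =>
    intro f hdiff
    obtain ⟨-, hd⟩ := hdiff
    rw [iteratedDeriv_zero] at hd
    have h := (hd.hasDerivAt)
    rw [hasDerivAt_iff_tendsto_slope] at h
    have h2 : Tendsto (fun x => slope f c x - deriv f c) (𝓝[≠] c) (𝓝 0) := by
      simpa using h.sub_const (deriv f c)
    refine h2.congr' ?_
    filter_upwards [self_mem_nhdsWithin] with x hx
    have hxne : x - c ≠ 0 := sub_ne_zero.2 hx
    rw [slope_def_field]
    simp only [Finset.sum_range_succ, Finset.sum_range_one]
    rw [iteratedDeriv_zero, iteratedDeriv_one]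
    field_simp
    ring
  | succ n ih =>
    intro f hdiff
    obtain ⟨hj, hd⟩ := hdiff
    -- g = deriv f is (n+1)-times differentiable at c
    have hg : NTimesDiffAt (n + 1) (deriv f) c := by
      constructor
      · intro j hjn
        obtain ⟨ε, hε, hye⟩ := hj (j + 1) (by omega)
        exact ⟨ε, hε, fun y hy => by
          have := hye y hy
          rwa [iteratedDeriv_succ'] at this⟩
      · rw [← iteratedDeriv_succ']
        exact hd
    have IH := ih (deriv f) hg
    obtain ⟨ε, hε, hf0⟩ := hj 0 (by omega)
    simp only [iteratedDeriv_zero] at hf0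
    -- φ x = f x - Taylor poly of degree n+2
    set T : ℝ → ℝ := fun x => ∑ m ∈ Finset.range (n + 3),
      iteratedDeriv m f c / (m.factorial : ℝ) * (x - c) ^ m with hT
    set φ : ℝ → ℝ := fun x => f x - T x with hφ
    set ψ : ℝ → ℝ := fun x => deriv f x - ∑ m ∈ Finset.range (n + 2),
      iteratedDeriv m (deriv f) c / (m.factorial : ℝ) * (x - c) ^ m with hψdef
    have hφc : φ c = 0 := by
      simp only [hφ, hT]
      have : ∑ m ∈ Finset.range (n + 3),
          iteratedDeriv m f c / (m.factorial : ℝ) * (c - c) ^ m = f c := by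
        rw [Finset.sum_eq_single 0]
        · simp
        · intro b _ hb
          simp [zero_pow hb]
        · simp
      rw [this, sub_self]
    have hder : ∀ y, |y - c| < ε → HasDerivAt φ (ψ y) y := by
      intro y hy
      have h1 : HasDerivAt f (deriv f y) y := (hf0 y hy).hasDerivAt
      have h2 := taylorSum_hasDerivAt f c y (n + 2)
      exact h1.sub h2
    have := mvt_step φ ψ c (n + 1) ε hε hφc hder IH
    exact this
  -- end

theorem taylor_peano_remainder (f : ℝ → ℝ) (c : ℝ) (n : ℕ)
    (hdiff : NTimesDiffAt (n + 1) f c) :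
    Filter.Tendsto
      (fun x => (f x - ∑ m ∈ Finset.range (n + 2),
          iteratedDeriv m f c / (m.factorial : ℝ) * (x - c) ^ m) / (x - c) ^ (n + 1))
      (𝓝[≠] c) (𝓝 0) := by
  exact taylor_peano_aux c n f hdiff
end

section
/- Let f : ℝ → ℝ, a : ℝ, and let n be a natural number. If f is (n + 1)-times differentiable at a (local sense), then there exists a function h : ℝ → ℝ such that h tends to 0 as x tends to a (along 𝓝 a, with h a = 0), and for all x, f x = (∑ i in Finset.range (n + 2), iteratedDeriv i f a / i.factorial * (x − a) ^ i) + h x * (x − a) ^ (n + 1). -/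
open Filter Topology

open Asymptotics

lemma seg_abs_le {a x y : ℝ} (hy : y ∈ segment ℝ a x) : |y - a| ≤ |x - a| := by
  rw [segment_eq_image' ℝ a x] at hy
  obtain ⟨t, ht, rfl⟩ := hy
  simp only [smul_eq_mul, add_sub_cancel_left, abs_mul]
  calc |t| * |x - a| ≤ 1 * |x - a| := by
        apply mul_le_mul_of_nonneg_right _ (abs_nonneg _)
        rw [abs_of_nonneg ht.1]; exact ht.2
    _ = |x - a| := one_mul _

lemma taylor_key_s14 : ∀ (n : ℕ) (f : ℝ → ℝ) (a : ℝ), NTimesDiffAt (n + 1) f a →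
    (fun x => f x - ∑ i ∈ Finset.range (n + 2),
      iteratedDeriv i f a / (i.factorial : ℝ) * (x - a) ^ i)
      =o[𝓝 a] fun x => (x - a) ^ (n + 1) := by
  intro n
  induction n with
  | zero =>
    intro f a hdiff
    obtain ⟨-, hd⟩ := hdiff
    rw [iteratedDeriv_zero] at hd
    have h := hasDerivAt_iff_isLittleO.1 hd.hasDerivAt
    have e1 : (fun x => f x - ∑ i ∈ Finset.range 2,
        iteratedDeriv i f a / (i.factorial : ℝ) * (x - a) ^ i)
        = fun x => f x - f a - (x - a) • deriv f a := by
      funext x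
      simp [Finset.sum_range_succ, iteratedDeriv_one, iteratedDeriv_zero, smul_eq_mul]
      ring
    rw [show (0 : ℕ) + 2 = 2 from rfl, e1]
    simpa [pow_one] using h
  | succ n ih =>
    intro f a hdiff
    obtain ⟨h1, h2⟩ := hdiff
    have hdf : NTimesDiffAt (n + 1) (deriv f) a := by
      refine ⟨fun j hj => ?_, ?_⟩
      · obtain ⟨ε, hε, hd⟩ := h1 (j + 1) (by omega)
        exact ⟨ε, hε, fun y hy => by
          rw [← iteratedDeriv_succ']; exact hd y hy⟩
      · rw [← iteratedDeriv_succ']; exact h2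
    have hg := ih (deriv f) a hdf
    obtain ⟨ε₀, hε₀, hf0⟩ := h1 0 (by omega)
    simp only [iteratedDeriv_zero] at hf0
    set g : ℝ → ℝ := fun x => deriv f x - ∑ i ∈ Finset.range (n + 2),
      iteratedDeriv i (deriv f) a / (i.factorial : ℝ) * (x - a) ^ i with hgdef
    set R : ℝ → ℝ := fun x => f x - ∑ i ∈ Finset.range (n + 3),
      iteratedDeriv i f a / (i.factorial : ℝ) * (x - a) ^ i with hRdef
    have shift : ∀ t : ℝ, ∑ i ∈ Finset.range (n + 3),
        iteratedDeriv i f a / (i.factorial : ℝ) * ((i : ℝ) * t ^ (i - 1))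
        = ∑ j ∈ Finset.range (n + 2),
          iteratedDeriv j (deriv f) a / (j.factorial : ℝ) * t ^ j := by
      intro t
      rw [Finset.sum_range_succ']
      simp only [Nat.cast_zero, zero_mul, mul_zero, add_zero]
      refine Finset.sum_congr rfl fun j _ => ?_
      rw [← iteratedDeriv_succ']
      rw [Nat.add_sub_cancel, Nat.factorial_succ]
      push_cast
      field_simp
    have hR : ∀ y : ℝ, |y - a| < ε₀ → HasDerivAt R (g y) y := by
      intro y hy
      have hfy : HasDerivAt f (deriv f y) y := (hf0 y hy).hasDerivAt
      have hp : HasDerivAt (fun x => ∑ i ∈ Finset.range (n + 3),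
          iteratedDeriv i f a / (i.factorial : ℝ) * (x - a) ^ i)
          (∑ i ∈ Finset.range (n + 3),
            iteratedDeriv i f a / (i.factorial : ℝ) * ((i : ℝ) * (y - a) ^ (i - 1))) y := by
        refine HasDerivAt.fun_sum fun i _ => ?_
        have := (((hasDerivAt_id y).sub_const a).pow i).const_mul
          (iteratedDeriv i f a / (i.factorial : ℝ))
        simpa [mul_one] using this
      have := hfy.sub hp
      rw [shift (y - a)] at this
      exact this
    have hRa : R a = 0 := by
      simp only [hRdef, sub_self]
      rw [Finset.sum_range_succ']
      simp
    rw [isLittleO_iff]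
    intro ε hε
    have hgb := isLittleO_iff.1 hg hε
    rw [Metric.eventually_nhds_iff] at hgb ⊢
    obtain ⟨δg, hδg, hgb⟩ := hgb
    refine ⟨min δg ε₀, lt_min hδg hε₀, fun x hx => ?_⟩
    rw [Real.dist_eq] at hx
    have hseg : ∀ y ∈ segment ℝ a x, HasDerivWithinAt R (g y) (segment ℝ a x) y := by
      intro y hy
      have := seg_abs_le hy
      exact (hR y (lt_of_le_of_lt this (lt_of_lt_of_le hx (min_le_right _ _)))).hasDerivWithinAt
    have hbound : ∀ y ∈ segment ℝ a x, ‖g y‖ ≤ ε * |x - a| ^ (n + 1) := by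
      intro y hy
      have h1 := seg_abs_le hy
      have h2 : dist y a < δg := by
        rw [Real.dist_eq]
        exact lt_of_le_of_lt h1 (lt_of_lt_of_le hx (min_le_left _ _))
      calc ‖g y‖ ≤ ε * ‖(y - a) ^ (n + 1)‖ := hgb h2
        _ = ε * |y - a| ^ (n + 1) := by rw [Real.norm_eq_abs, abs_pow]
        _ ≤ ε * |x - a| ^ (n + 1) := by
            exact mul_le_mul_of_nonneg_left (pow_le_pow_left₀ (abs_nonneg _) h1 _) hε.le
    have key := Convex.norm_image_sub_le_of_norm_hasDerivWithin_le hseg hbound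
      (convex_segment a x) (left_mem_segment ℝ a x) (right_mem_segment ℝ a x)
    rw [hRa, sub_zero] at key
    calc ‖R x‖ ≤ ε * |x - a| ^ (n + 1) * ‖x - a‖ := key
      _ = ε * ‖(x - a) ^ (n + 1 + 1)‖ := by
          rw [Real.norm_eq_abs, Real.norm_eq_abs, abs_pow]
          ring

theorem taylor_peano (f : ℝ → ℝ) (a : ℝ) (n : ℕ)
    (hdiff : NTimesDiffAt (n + 1) f a) :
    ∃ h : ℝ → ℝ, Filter.Tendsto h (𝓝 a) (𝓝 0) ∧ h a = 0 ∧
      ∀ x : ℝ, f x = (∑ i ∈ Finset.range (n + 2),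
          iteratedDeriv i f a / (i.factorial : ℝ) * (x - a) ^ i) +
        h x * (x - a) ^ (n + 1) := by
  have hkey := taylor_key_s14 n f a hdiff
  set P : ℝ → ℝ := fun x => ∑ i ∈ Finset.range (n + 2),
    iteratedDeriv i f a / (i.factorial : ℝ) * (x - a) ^ i with hP
  refine ⟨fun x => if x = a then 0 else (f x - P x) / (x - a) ^ (n + 1), ?_, by simp, ?_⟩
  · rw [Metric.tendsto_nhds]
    intro ε hε
    have hgb := isLittleO_iff.1 hkey (half_pos hε)
    filter_upwards [hgb] with x hx
    rw [Real.dist_eq, sub_zero]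
    by_cases hxa : x = a
    · simpa [hxa] using hε
    · simp only [if_neg hxa]
      have hpos : (0:ℝ) < |x - a| ^ (n + 1) :=
        pow_pos (abs_pos.2 (sub_ne_zero.2 hxa)) _
      rw [abs_div, abs_pow]
      rw [div_lt_iff₀ hpos]
      calc |f x - P x| ≤ ε / 2 * ‖(x - a) ^ (n + 1)‖ := hx
        _ = ε / 2 * |x - a| ^ (n + 1) := by rw [Real.norm_eq_abs, abs_pow]
        _ < ε * |x - a| ^ (n + 1) := by
            exact mul_lt_mul_of_pos_right (half_lt_self hε) hpos
  · intro x
    by_cases hxa : x = a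
    · subst hxa
      simp only [if_pos rfl, zero_mul, add_zero, hP]
      rw [Finset.sum_range_succ']
      simp
    · simp only [if_neg hxa]
      have hne : (x - a) ^ (n + 1) ≠ 0 := pow_ne_zero _ (sub_ne_zero.2 hxa)
      rw [div_mul_cancel₀ _ hne]
      ring
end

section
/- Let f : ℝ → ℝ, let U ⊆ ℝ be open with r ∈ U, suppose f is C¹ on U (ContDiffOn ℝ 1 f U), f r = r, deriv f r = 0, and f is 2-times differentiable at r (local sense). Then there exist δ > 0 and ε > 0 such that for every x0 with |r − x0| < δ and every natural number n, |f^[n] x0 − r| ≤ ((|iteratedDeriv 2 f r| + ε) / 2) ^ (2 ^ n − 1) * |x0 − r| ^ (2 ^ n). -/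
theorem quadratic_convergence_fixed_point (f : ℝ → ℝ) (U : Set ℝ) (r : ℝ)
    (hU : IsOpen U) (hrU : r ∈ U) (hf : ContDiffOn ℝ 1 f U)
    (hfr : f r = r) (hder : deriv f r = 0) (hdiff : NTimesDiffAt 2 f r) :
    ∃ δ > 0, ∃ ε > 0, ∀ x0 : ℝ, |r - x0| < δ → ∀ n : ℕ,
      |f^[n] x0 - r| ≤
        ((|iteratedDeriv 2 f r| + ε) / 2) ^ (2 ^ n - 1) * |x0 - r| ^ 2 ^ n := by
  have hd1 : DifferentiableAt ℝ (deriv f) r := by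
    have h := hdiff.2
    rwa [iteratedDeriv_one] at h
  obtain ⟨C, hCpos, hbig⟩ := hd1.isBigO_sub.exists_pos
  rw [Asymptotics.isBigOWith_iff] at hbig
  have hbig' : ∀ᶠ x in nhds r, |deriv f x| ≤ C * |x - r| := by
    filter_upwards [hbig] with x hx
    simpa [hder, Real.norm_eq_abs] using hx
  obtain ⟨ρ, hρpos, hball⟩ :=
    Metric.eventually_nhds_iff.mp (hbig'.and (hU.eventually_mem hrU))
  set K := C + 1 with hK
  have hKpos : (0:ℝ) < K := by positivity
  set ε := 2*C + 2 with hε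
  have hεpos : (0:ℝ) < ε := by positivity
  set κ := (|iteratedDeriv 2 f r| + ε) / 2 with hκ
  have hKκ : K ≤ κ := by
    have h0 : (0:ℝ) ≤ |iteratedDeriv 2 f r| := abs_nonneg _
    rw [hκ, hε, hK]; linarith
  have key : ∀ x, |x - r| < ρ → |f x - r| ≤ K * |x - r|^2 := by
    intro x hx
    have hprop : ∀ y ∈ Metric.closedBall r |x - r|,
        |deriv f y| ≤ C * |y - r| ∧ y ∈ U := by
      intro y hy
      rw [Metric.mem_closedBall, Real.dist_eq] at hy
      exact hball (lt_of_le_of_lt hy hx)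
    have hderiv : ∀ y ∈ Metric.closedBall r |x - r|,
        HasDerivWithinAt f (deriv f y) (Metric.closedBall r |x - r|) y :=
      fun y hy => (((hf.differentiableOn one_ne_zero).differentiableAt
        (hU.mem_nhds (hprop y hy).2)).hasDerivAt).hasDerivWithinAt
    have hbound : ∀ y ∈ Metric.closedBall r |x - r|, ‖deriv f y‖ ≤ K * |x - r| := by
      intro y hy
      have h1 := (hprop y hy).1
      rw [Metric.mem_closedBall, Real.dist_eq] at hy
      have h3 : (0:ℝ) ≤ |x - r| := abs_nonneg _
      have h4 : (0:ℝ) ≤ |y - r| := abs_nonneg _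
      calc ‖deriv f y‖ = |deriv f y| := rfl
        _ ≤ C * |y - r| := h1
        _ ≤ K * |x - r| := by rw [hK]; nlinarith
    have hxs : x ∈ Metric.closedBall r |x - r| := by
      rw [Metric.mem_closedBall, Real.dist_eq]
    have hrs : r ∈ Metric.closedBall r |x - r| := by
      simp [abs_nonneg]
    have hmvt := (convex_closedBall r |x - r|).norm_image_sub_le_of_norm_hasDerivWithin_le
      hderiv hbound hrs hxs
    rw [hfr] at hmvt
    calc |f x - r| ≤ K * |x - r| * ‖x - r‖ := hmvt
      _ = K * |x - r|^2 := by rw [Real.norm_eq_abs]; ring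
  refine ⟨min ρ (1/K), by positivity, ε, hεpos, ?_⟩
  intro x0 hx0 n
  set d := |x0 - r| with hd
  have hd0 : (0:ℝ) ≤ d := abs_nonneg _
  have hdρ : d < ρ := by
    rw [hd, abs_sub_comm]; exact lt_of_lt_of_le hx0 (min_le_left _ _)
  have hdK : K * d ≤ 1 := by
    have h1 : d < 1/K := by
      rw [hd, abs_sub_comm]; exact lt_of_lt_of_le hx0 (min_le_right _ _)
    rw [lt_div_iff₀ hKpos] at h1
    nlinarith
  have hbd : ∀ m : ℕ, K^m * d^(m+1) ≤ d := by
    intro m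
    have h1 : K^m * d^(m+1) = (K*d)^m * d := by rw [mul_pow, pow_succ]; ring
    rw [h1]
    have h2 : (K*d)^m ≤ 1 := pow_le_one₀ (by positivity) hdK
    nlinarith [pow_nonneg (mul_nonneg hKpos.le hd0) m]
  have hpow : ∀ n : ℕ, 2^n - 1 + 1 = 2^n := fun n =>
    Nat.sub_add_cancel (Nat.one_le_two_pow)
  have main : ∀ n : ℕ, |f^[n] x0 - r| ≤ K^(2^n - 1) * d^(2^n) := by
    intro n
    induction n with
    | zero => simpa [hd] using le_refl d
    | succ n ih =>
      set y := f^[n] x0 with hy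
      have hyd : |y - r| ≤ d := by
        calc |y - r| ≤ K^(2^n - 1) * d^(2^n) := ih
          _ ≤ d := by rw [← hpow n]; exact hbd _
      have hyρ : |y - r| < ρ := lt_of_le_of_lt hyd hdρ
      have hstep : |f y - r| ≤ K * |y - r|^2 := key y hyρ
      have hsq : |y - r|^2 ≤ (K^(2^n - 1) * d^(2^n))^2 :=
        pow_le_pow_left₀ (abs_nonneg _) ih 2
      have hexp : 2 * (2^n - 1) + 1 = 2^(n+1) - 1 := by
        have := hpow n
        have h2 : 2^(n+1) = 2 * 2^n := by rw [pow_succ]; ring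
        omega
      calc |f^[n+1] x0 - r| = |f y - r| := by rw [Function.iterate_succ_apply']
        _ ≤ K * |y - r|^2 := hstep
        _ ≤ K * (K^(2^n - 1) * d^(2^n))^2 :=
            mul_le_mul_of_nonneg_left hsq hKpos.le
        _ = K^(2*(2^n - 1) + 1) * d^(2*2^n) := by ring
        _ = K^(2^(n+1) - 1) * d^(2^(n+1)) := by
            rw [hexp, pow_succ]; ring_nf
  calc |f^[n] x0 - r| ≤ K^(2^n - 1) * d^(2^n) := main n
    _ ≤ κ^(2^n - 1) * d^(2^n) := by
        apply mul_le_mul_of_nonneg_right _ (pow_nonneg hd0 _)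
        exact pow_le_pow_left₀ hKpos.le hKκ _
    _ = κ^(2^n - 1) * |x0 - r|^(2^n) := by rw [hd]
end
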